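/- A graded poset P is half-Eulerian (i.e., (1/2)-Eulerian) if and only if: (1) in every interval [x,y] of odd rank, the number of elements of even relative rank equals the number of elements of odd relative rank; and (2) in every interval [x,y] of even rank, the number of elements z ∈ [x,y] with ρ(x,z) even exceeds the number with ρ(x,z) odd by exactly one. -/

import Mathlib

open scoped Classical

attribute [local instance] Fintype.ofFinite

/-- A rank function making a bounded poset graded of rank `n+1`. -/
def IsGraded (P : Type) [PartialOrder P] [BoundedOrder P] (ρ : P → ℕ) (n : ℕ) : Prop :=
  ρ ⊥ = 0 ∧ ρ ⊤ = n + 1 ∧ ∀ x y : P, x ⋖ y → ρ y = ρ x + 1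

/-- A poset is `r`-thick if every nonempty open interval has at least `r` elements. -/
def RThick (P : Type) [PartialOrder P] [Fintype P] (r : ℕ) : Prop :=
  ∀ x y : P, x < y → (∃ z, x < z ∧ z < y) →
    r ≤ (Finset.univ.filter fun z => x < z ∧ z < y).card

/-- The flag number `f_S(P)`: the number of chains of `P` whose set of ranks is `S`. -/
noncomputable def flagNum {P : Type} [PartialOrder P] [Fintype P] (ρ : P → ℕ)
    (S : Finset ℕ) : ℕ :=
  (Finset.univ.filter fun c : Finset P =>
    IsChain (· ≤ ·) (c : Set P) ∧ c.image ρ = S ∧ c.card = S.card).card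

/-- The flag number `f_S([x,y])` of the interval `[x,y]`, with ranks relative to `x`. -/
noncomputable def flagNumI {P : Type} [PartialOrder P] [Fintype P] (ρ : P → ℕ)
    (x y : P) (S : Finset ℕ) : ℕ :=
  (Finset.univ.filter fun c : Finset P =>
    IsChain (· ≤ ·) (c : Set P) ∧ (∀ z ∈ c, x < z ∧ z < y) ∧
      c.image (fun z => ρ z - ρ x) = S ∧ c.card = S.card).card

/-- The `k`-Möbius function `μ_k([x,y])`. -/
noncomputable def muk {P : Type} [PartialOrder P] [Fintype P] (k : ℝ) (x : P) (y : P) : ℝ :=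
  if x = y then 1
  else -1 - (1/k) * ∑ z ∈ (Finset.univ.filter fun z => x < z ∧ z < y).attach,
    muk k x z.val
termination_by (Finset.univ.filter fun w => w < y).card
decreasing_by
  have hz : (z : P) < y := (Finset.mem_filter.mp z.2).2.2
  apply Finset.card_lt_card
  rw [Finset.ssubset_iff_of_subset]
  · exact ⟨z, Finset.mem_filter.mpr ⟨Finset.mem_univ _, hz⟩,
      fun hc => absurd (Finset.mem_filter.mp hc).2 (lt_irrefl _)⟩
  · intro w hw
    exact Finset.mem_filter.mpr ⟨Finset.mem_univ _, (Finset.mem_filter.mp hw).2.trans hz⟩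

/-- The ordinary Möbius function of a finite poset. -/
noncomputable def mobius {P : Type} [PartialOrder P] [Fintype P] (x : P) (y : P) : ℤ :=
  if x = y then 1
  else -∑ z ∈ (Finset.univ.filter fun z => x ≤ z ∧ z < y).attach, mobius x z.val
termination_by (Finset.univ.filter fun w => w < y).card
decreasing_by
  have hz : (z : P) < y := (Finset.mem_filter.mp z.2).2.2
  apply Finset.card_lt_card
  rw [Finset.ssubset_iff_of_subset]
  · exact ⟨z, Finset.mem_filter.mpr ⟨Finset.mem_univ _, hz⟩,
      fun hc => absurd (Finset.mem_filter.mp hc).2 (lt_irrefl _)⟩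
  · intro w hw
    exact Finset.mem_filter.mpr ⟨Finset.mem_univ _, (Finset.mem_filter.mp hw).2.trans hz⟩

/-- A graded poset is `k`-Eulerian when `μ_k([x,y]) = (-1)^{ρ(y)-ρ(x)}` on every interval. -/
def IsKEulerian (P : Type) [PartialOrder P] [Fintype P] (ρ : P → ℕ) (k : ℝ) : Prop :=
  ∀ x y : P, x ≤ y → muk k x y = (-1 : ℝ) ^ (ρ y - ρ x)

/-- The flag `L^k` vector of a poset of rank `n+1`. -/
noncomputable def Lk {P : Type} [PartialOrder P] [Fintype P] (k : ℝ) (n : ℕ) (ρ : P → ℕ)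
    (S : Finset ℕ) : ℝ :=
  (-1 : ℝ) ^ (n - S.card) *
    ∑ T ∈ (Finset.Icc 1 n).powerset.filter (fun T => Finset.Icc 1 n \ S ⊆ T),
      (-(1/(2*k))) ^ T.card * (flagNum ρ T : ℝ)

/-- The flag `L^k` vector of an interval `[x,y]` of rank `n+1`. -/
noncomputable def LkI {P : Type} [PartialOrder P] [Fintype P] (k : ℝ) (n : ℕ) (ρ : P → ℕ)
    (x y : P) (S : Finset ℕ) : ℝ :=
  (-1 : ℝ) ^ (n - S.card) *
    ∑ T ∈ (Finset.Icc 1 n).powerset.filter (fun T => Finset.Icc 1 n \ S ⊆ T),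
      (-(1/(2*k))) ^ T.card * (flagNumI ρ x y T : ℝ)

/-- A set is even if it is a disjoint union of intervals of even cardinality. -/
def IsEvenSet (S : Finset ℕ) : Prop :=
  ∃ J : Finset (ℕ × ℕ),
    S = J.biUnion (fun p => Finset.Icc p.1 p.2) ∧
    (∀ p ∈ J, p.1 ≤ p.2 ∧ Even (p.2 + 1 - p.1)) ∧
    (∀ p ∈ J, ∀ q ∈ J, p ≠ q → Disjoint (Finset.Icc p.1 p.2) (Finset.Icc q.1 q.2))

/-- The horizontal `r`-fold duplication `D^r P`. -/
inductive Dup (P : Type) [PartialOrder P] [BoundedOrder P] (r : ℕ) : Type where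
  | bot : Dup P r
  | top : Dup P r
  | mid : {x : P // x ≠ ⊥ ∧ x ≠ ⊤} → Fin r → Dup P r

namespace Dup

variable {P : Type} [PartialOrder P] [BoundedOrder P] {r : ℕ}

def le : Dup P r → Dup P r → Prop
  | .bot, _ => True
  | .mid _ _, .bot => False
  | .mid x i, .mid y j => (x = y ∧ i = j) ∨ (x : P) < (y : P)
  | .mid _ _, .top => True
  | .top, .top => True
  | .top, _ => False

instance : PartialOrder (Dup P r) where
  le := Dup.le
  le_refl a := by cases a with
    | bot => trivial
    | top => trivial
    | mid x i => exact Or.inl ⟨rfl, rfl⟩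
  le_trans a b c hab hbc := by
    cases a with
    | bot => trivial
    | top =>
      cases b with
      | top =>
        cases c with
        | top => trivial
        | bot => exact hbc.elim
        | mid _ _ => exact hbc.elim
      | bot => exact hab.elim
      | mid _ _ => exact hab.elim
    | mid x i =>
      cases b with
      | bot => exact hab.elim
      | top =>
        cases c with
        | top => trivial
        | bot => exact hbc.elim
        | mid _ _ => exact hbc.elim
      | mid y j =>
        cases c with
        | bot => exact hbc.elim
        | top => trivial
        | mid z l =>
          rcases hab with ⟨rfl, rfl⟩ | h1
          · exact hbc
          · rcases hbc with ⟨rfl, rfl⟩ | h2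
            · exact Or.inr h1
            · exact Or.inr (h1.trans h2)
  le_antisymm a b hab hba := by
    cases a with
    | bot =>
      cases b with
      | bot => rfl
      | top => exact hba.elim
      | mid _ _ => exact hba.elim
    | top =>
      cases b with
      | top => rfl
      | bot => exact hab.elim
      | mid _ _ => exact hab.elim
    | mid x i =>
      cases b with
      | bot => exact hab.elim
      | top => exact hba.elim
      | mid y j =>
        rcases hab with ⟨rfl, rfl⟩ | h1
        · rfl
        · rcases hba with ⟨rfl, rfl⟩ | h2
          · exact absurd h1 (lt_irrefl _)
          · exact absurd (h1.trans h2) (lt_irrefl _)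

instance : BoundedOrder (Dup P r) where
  top := .top
  bot := .bot
  le_top a := by cases a <;> trivial
  bot_le a := trivial

instance [Finite P] : Finite (Dup P r) :=
  Finite.of_injective
    (fun a : Dup P r =>
      (match a with
        | .bot => none
        | .top => some none
        | .mid x i => some (some (x, i)) :
        Option (Option ({x : P // x ≠ ⊥ ∧ x ≠ ⊤} × Fin r))))
    (by intro a b h; cases a <;> cases b <;> simp_all)

/-- The rank function of `D^r P`, where `P` has rank `n+1`. -/
def rank (ρ : P → ℕ) (n : ℕ) : Dup P r → ℕ
  | .bot => 0
  | .top => n + 1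
  | .mid x _ => ρ x.val

/-- `a ∈ D^r P` is a copy of `x ∈ P`. -/
def IsCopy (a : Dup P r) (x : P) : Prop :=
  (x = ⊥ ∧ a = .bot) ∨ (x = ⊤ ∧ a = .top) ∨ ∃ h i, a = .mid ⟨x, h⟩ i

end Dup

/-!
On an interval `[x,y]` whose proper subintervals are already half-Eulerian, the recursion
`μ_{1/2}([x,y]) = -1 - 2 ∑_{x<z<y} μ_{1/2}([x,z])` says that `μ_{1/2}([x,y]) = (-1)^{ρ(x,y)}` exactly
when `2 ∑_{x ≤ z ≤ y} (-1)^{ρ(x,z)} = 1 + (-1)^{ρ(x,y)}`. The alternating sum counts elements of even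
minus elements of odd relative rank, and the right-hand side is `0` or `2` according to the parity
of the rank of `[x,y]`; induction on `y` makes the interval-by-interval equivalence global.
-/

open Finset

section Mobius

variable {P : Type} [PartialOrder P] [Fintype P]

theorem muk_self (k : ℝ) (x : P) : muk k x x = 1 := by
  rw [muk, if_pos rfl]

theorem muk_of_lt (k : ℝ) {x y : P} (h : x < y) :
    muk k x y = -1 - (1/k) * ∑ z ∈ univ.filter (fun z => x < z ∧ z < y), muk k x z := by
  rw [muk, if_neg h.ne, sum_attach]

theorem isKEulerian_iff_forall_lt (ρ : P → ℕ) (k : ℝ) :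
    IsKEulerian P ρ k ↔ ∀ x y : P, x < y →
      (-1 : ℝ) ^ (ρ y - ρ x) =
        -1 - (1/k) * ∑ z ∈ univ.filter (fun z => x < z ∧ z < y), (-1 : ℝ) ^ (ρ z - ρ x) := by
  constructor
  · intro hE x y hxy
    rw [← hE x y hxy.le, muk_of_lt k hxy]
    congr 2
    exact sum_congr rfl fun z hz => hE x z (mem_filter.1 hz).2.1.le
  · intro hrec x y hxy
    induction y using WellFoundedLT.induction with
    | _ y ih =>
      rcases hxy.lt_or_eq with hlt | rfl
      · rw [muk_of_lt k hlt, hrec x y hlt]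
        congr 2
        refine sum_congr rfl fun z hz => ?_
        obtain ⟨hxz, hzy⟩ := (mem_filter.1 hz).2
        exact ih z hzy hxz.le
      · rw [muk_self, Nat.sub_self, pow_zero]

end Mobius

theorem sum_neg_one_pow_eq_card_even_sub_card_odd {α R : Type*} [Ring R] (s : Finset α)
    (f : α → ℕ) :
    ∑ a ∈ s, (-1 : R) ^ f a =
      (#(s.filter fun a => Even (f a)) : R) - #(s.filter fun a => Odd (f a)) := by
  rw [← sum_filter_add_sum_filter_not s fun a => Even (f a)]
  simp only [Nat.not_even_iff_odd]
  rw [sum_congr rfl (g := fun _ => (1 : R)) fun a ha => (mem_filter.1 ha).2.neg_one_pow,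
    sum_congr (s₁ := s.filter fun a => Odd (f a)) (g := fun _ => (-1 : R)) rfl
      fun a ha => (mem_filter.1 ha).2.neg_one_pow]
  simp only [sum_const, nsmul_eq_mul, mul_one, mul_neg, sub_eq_add_neg]

theorem two_mul_sub_eq_one_add_neg_one_pow_iff (e o d : ℕ) :
    2 * ((e : ℝ) - o) = 1 + (-1) ^ d ↔ (Odd d → e = o) ∧ (Even d → e = o + 1) := by
  rcases Nat.even_or_odd d with hd | hd
  · have hnd : ¬Odd d := Nat.not_odd_iff_even.2 hd
    simp only [hd.neg_one_pow, hd, hnd, false_imp_iff, true_imp_iff, true_and]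
    constructor
    · intro h
      exact_mod_cast (by linarith : (e : ℝ) = o + 1)
    · rintro rfl
      push_cast
      ring
  · have hnd : ¬Even d := Nat.not_even_iff_odd.2 hd
    simp only [hd.neg_one_pow, hd, hnd, false_imp_iff, true_imp_iff, and_true]
    constructor
    · intro h
      exact_mod_cast (by linarith : (e : ℝ) = o)
    · rintro rfl
      ring

theorem sum_filter_le_le_of_lt {P M : Type*} [PartialOrder P] [Fintype P] [AddCommMonoid M]
    {x y : P} (h : x < y) (f : P → M) :
    ∑ z ∈ univ.filter (fun z => x ≤ z ∧ z ≤ y), f z =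
      f x + f y + ∑ z ∈ univ.filter (fun z => x < z ∧ z < y), f z := by
  have hIcc : univ.filter (fun z => x ≤ z ∧ z ≤ y) =
      insert x (insert y (univ.filter fun z => x < z ∧ z < y)) := by
    ext z
    simp only [mem_filter, mem_univ, true_and, mem_insert]
    constructor
    · rintro ⟨hxz, hzy⟩
      rcases hxz.lt_or_eq with hxz | rfl
      · rcases hzy.lt_or_eq with hzy | rfl
        · exact Or.inr (Or.inr ⟨hxz, hzy⟩)
        · exact Or.inr (Or.inl rfl)
      · exact Or.inl rfl
    · rintro (rfl | rfl | ⟨hxz, hzy⟩)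
      exacts [⟨le_rfl, h.le⟩, ⟨h.le, le_rfl⟩, ⟨hxz.le, hzy.le⟩]
  rw [hIcc, sum_insert, sum_insert, add_assoc]
  · simp
  · simp [h.ne]

theorem halfEulerian_step_iff {P : Type} [PartialOrder P] [Fintype P] (ρ : P → ℕ) {x y : P}
    (hxy : x ≤ y) :
    (x < y → (-1 : ℝ) ^ (ρ y - ρ x) =
        -1 - (1/(1/2)) * ∑ z ∈ univ.filter (fun z => x < z ∧ z < y), (-1 : ℝ) ^ (ρ z - ρ x)) ↔
      (Odd (ρ y - ρ x) →
          #(univ.filter fun z => x ≤ z ∧ z ≤ y ∧ Even (ρ z - ρ x)) =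
          #(univ.filter fun z => x ≤ z ∧ z ≤ y ∧ Odd (ρ z - ρ x))) ∧
      (Even (ρ y - ρ x) →
          #(univ.filter fun z => x ≤ z ∧ z ≤ y ∧ Even (ρ z - ρ x)) =
          #(univ.filter fun z => x ≤ z ∧ z ≤ y ∧ Odd (ρ z - ρ x)) + 1) := by
  have hcount : ∑ z ∈ univ.filter (fun z => x ≤ z ∧ z ≤ y), (-1 : ℝ) ^ (ρ z - ρ x) =
      (#(univ.filter fun z => x ≤ z ∧ z ≤ y ∧ Even (ρ z - ρ x)) : ℝ) -
        #(univ.filter fun z => x ≤ z ∧ z ≤ y ∧ Odd (ρ z - ρ x)) := by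
    rw [sum_neg_one_pow_eq_card_even_sub_card_odd]
    simp only [filter_filter, and_assoc]
  rw [← two_mul_sub_eq_one_add_neg_one_pow_iff, ← hcount]
  rcases hxy.lt_or_eq with hlt | rfl
  · rw [sum_filter_le_le_of_lt hlt, Nat.sub_self, pow_zero]
    norm_num only [hlt, true_imp_iff]
    constructor <;> intro h <;> linarith
  · simp only [← le_antisymm_iff, filter_eq, mem_univ, if_true, sum_singleton, lt_irrefl,
      false_imp_iff, Nat.sub_self, pow_zero]
    norm_num

theorem isHalfEulerian_iff_general {P : Type} [PartialOrder P] [Finite P]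
    (ρ : P → ℕ) :
    IsKEulerian P ρ (1/2) ↔
      ((∀ x y : P, x ≤ y → Odd (ρ y - ρ x) →
          (Finset.univ.filter fun z => x ≤ z ∧ z ≤ y ∧ Even (ρ z - ρ x)).card =
          (Finset.univ.filter fun z => x ≤ z ∧ z ≤ y ∧ Odd (ρ z - ρ x)).card) ∧
       (∀ x y : P, x ≤ y → Even (ρ y - ρ x) →
          (Finset.univ.filter fun z => x ≤ z ∧ z ≤ y ∧ Even (ρ z - ρ x)).card =
          (Finset.univ.filter fun z => x ≤ z ∧ z ≤ y ∧ Odd (ρ z - ρ x)).card + 1)) := by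
  rw [isKEulerian_iff_forall_lt]
  constructor
  · intro hrec
    have hstep x y (hxy : x ≤ y) := (halfEulerian_step_iff ρ hxy).1 (hrec x y)
    exact ⟨fun x y hxy => (hstep x y hxy).1, fun x y hxy => (hstep x y hxy).2⟩
  · rintro ⟨hodd, heven⟩ x y hxy
    exact (halfEulerian_step_iff ρ hxy.le).2 ⟨hodd x y hxy.le, heven x y hxy.le⟩ hxy

/-- characterization of half-Eulerian posets by counting elements of
even and odd relative rank in intervals. -/
theorem isHalfEulerian_iff {P : Type} [PartialOrder P] [BoundedOrder P] [Finite P]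
    (n : ℕ) (ρ : P → ℕ) (hP : IsGraded P ρ n) :
    IsKEulerian P ρ (1/2) ↔
      ((∀ x y : P, x ≤ y → Odd (ρ y - ρ x) →
          (Finset.univ.filter fun z => x ≤ z ∧ z ≤ y ∧ Even (ρ z - ρ x)).card =
          (Finset.univ.filter fun z => x ≤ z ∧ z ≤ y ∧ Odd (ρ z - ρ x)).card) ∧
       (∀ x y : P, x ≤ y → Even (ρ y - ρ x) →
          (Finset.univ.filter fun z => x ≤ z ∧ z ≤ y ∧ Even (ρ z - ρ x)).card =
          (Finset.univ.filter fun z => x ≤ z ∧ z ≤ y ∧ Odd (ρ z - ρ x)).card + 1)) :=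
  isHalfEulerian_iff_general ρ
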